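/- Let Γ_1, Γ_2, ... be events generating σ-algebras F_{m,n} = σ(Γ_m, ..., Γ_n), and let φ(k) = sup_m φ(F_{1,m}, F_{m+k,∞}) be the φ-mixing coefficient. Let q : ℕ → ℕ satisfy: for every integer k, the number of n with q(n) = k is at most K. If ∑_k φ(k) < ∞, then there is a constant c > 0 (independent of M, N) such that for all N ≥ M ≥ 1, ∑_{m,n=M}^N |P(Γ_{q(m)} ∩ Γ_{q(n)}) − P(Γ_{q(m)})P(Γ_{q(n)})| ≤ c ∑_{n=M}^N P(Γ_{q(n)}). -/

import Mathlib

/-!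
Mixing gives `|P(Γ_a ∩ Γ_b) - P(Γ_a) P(Γ_b)| ≤ φ(|a - b|) (P(Γ_a) + P(Γ_b))` for `a, b ≥ 1`,
and the trivial bound `≤ P(Γ_b)` covers `Γ_0`, which no past σ-algebra contains. Summing the row
`n ↦ φ(|q m - q n|)` costs at most `2K ∑ φ`, since each distance is attained by at most `2K`
indices `n`; the pairs with `q n = 0` cost at most `K` per row.
-/

open MeasureTheory Finset

namespace MeasureTheory

variable {Ω : Type*} [MeasurableSpace Ω] {μ : Measure Ω}

lemma abs_measureReal_inter_sub_mul_le_right [IsProbabilityMeasure μ] (s t : Set Ω) :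
    |μ.real (s ∩ t) - μ.real s * μ.real t| ≤ μ.real t :=
  abs_sub_le_of_nonneg_of_le measureReal_nonneg (measureReal_mono Set.inter_subset_right)
    (by positivity) (mul_le_of_le_one_left measureReal_nonneg measureReal_le_one)

lemma abs_measureReal_inter_sub_mul_le_of_cond [IsFiniteMeasure μ] {s t : Set Ω} {c : ℝ}
    (h : μ s ≠ 0 → |μ.real (s ∩ t) / μ.real s - μ.real t| ≤ c) :
    |μ.real (s ∩ t) - μ.real s * μ.real t| ≤ c * μ.real s := by
  by_cases hs : μ s = 0
  · have hst : μ.real (s ∩ t) = 0 :=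
      measureReal_mono_null Set.inter_subset_left (by simp [measureReal_def, hs])
    rw [hst, measureReal_def, hs]
    simp
  · have hpos : 0 < μ.real s := ENNReal.toReal_pos hs (measure_ne_top μ s)
    have hfactor : μ.real (s ∩ t) - μ.real s * μ.real t
        = (μ.real (s ∩ t) / μ.real s - μ.real t) * μ.real s := by
      field_simp
    rw [hfactor, abs_mul, abs_of_pos hpos]
    gcongr
    exact h hs

def IsPhiMixing (μ : Measure Ω) (Γ : ℕ → Set Ω) (φ : ℕ → ℝ) : Prop :=
  ∀ (m k : ℕ) (A B : Set Ω),
    MeasurableSet[MeasurableSpace.generateFrom {S | ∃ j : ℕ, 1 ≤ j ∧ j ≤ m ∧ S = Γ j}] A →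
    MeasurableSet[MeasurableSpace.generateFrom {S | ∃ j : ℕ, m + k ≤ j ∧ S = Γ j}] B →
    μ A ≠ 0 →
    |(μ (A ∩ B)).toReal / (μ A).toReal - (μ B).toReal| ≤ φ k

namespace IsPhiMixing

variable {Γ : ℕ → Set Ω} {φ : ℕ → ℝ}

lemma nonneg [IsProbabilityMeasure μ] (hmix : IsPhiMixing μ Γ φ) (k : ℕ) : 0 ≤ φ k := by
  simpa using hmix 0 k Set.univ Set.univ MeasurableSet.univ MeasurableSet.univ (by simp)

lemma abs_measureReal_inter_sub_mul_le [IsFiniteMeasure μ] (hmix : IsPhiMixing μ Γ φ)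
    {a b : ℕ} (ha : 1 ≤ a) (hab : a ≤ b) :
    |μ.real (Γ a ∩ Γ b) - μ.real (Γ a) * μ.real (Γ b)| ≤ φ (b - a) * μ.real (Γ a) :=
  abs_measureReal_inter_sub_mul_le_of_cond <| hmix a (b - a) _ _
    (MeasurableSpace.measurableSet_generateFrom ⟨a, ha, le_rfl, rfl⟩)
    (MeasurableSpace.measurableSet_generateFrom ⟨b, by omega, rfl⟩)

/-- The indicator terms pay for `Γ 0`, to which the mixing condition does not apply. -/
lemma abs_measureReal_inter_sub_mul_le_weighted [IsProbabilityMeasure μ]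
    (hmix : IsPhiMixing μ Γ φ) (a b : ℕ) :
    |μ.real (Γ a ∩ Γ b) - μ.real (Γ a) * μ.real (Γ b)|
      ≤ (φ (a.dist b) + if b = 0 then 1 else 0) * μ.real (Γ a)
        + (φ (b.dist a) + if a = 0 then 1 else 0) * μ.real (Γ b) := by
  have hφ := hmix.nonneg
  have hΓ : ∀ c, 0 ≤ μ.real (Γ c) := fun _ => measureReal_nonneg
  have hw : ∀ c d, (0 : ℝ) ≤ φ c + if d = 0 then 1 else 0 := fun c d => by
    have := hφ c; split_ifs <;> linarith
  have hsymm : |μ.real (Γ a ∩ Γ b) - μ.real (Γ a) * μ.real (Γ b)|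
      = |μ.real (Γ b ∩ Γ a) - μ.real (Γ b) * μ.real (Γ a)| := by
    rw [Set.inter_comm, mul_comm]
  rw [Nat.dist_comm b a]
  rcases Nat.eq_zero_or_pos a with rfl | ha
  · have := mul_nonneg (hw (Nat.dist 0 b) b) (hΓ 0)
    have := abs_measureReal_inter_sub_mul_le_right (μ := μ) (Γ 0) (Γ b)
    simp only [if_true]
    nlinarith [hφ (Nat.dist 0 b), hΓ b]
  rcases Nat.eq_zero_or_pos b with rfl | hb
  · have := mul_nonneg (hw (a.dist 0) a) (hΓ 0)
    have := abs_measureReal_inter_sub_mul_le_right (μ := μ) (Γ 0) (Γ a)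
    rw [hsymm]
    simp only [if_true]
    nlinarith [hφ (a.dist 0), hΓ a]
  simp only [if_neg ha.ne', if_neg hb.ne', add_zero]
  rcases le_total a b with hab | hba
  · rw [Nat.dist_eq_sub_of_le hab]
    nlinarith [hmix.abs_measureReal_inter_sub_mul_le ha hab, hφ (b - a), hΓ b]
  · rw [Nat.dist_eq_sub_of_le_right hba, hsymm]
    nlinarith [hmix.abs_measureReal_inter_sub_mul_le hb hba, hφ (a - b), hΓ a]

end IsPhiMixing

end MeasureTheory

section Counting

variable {ι : Type*} {s : Finset ι} {f : ι → ℕ} {K : ℕ}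

lemma Finset.sum_comp_le_mul_tsum (hf : ∀ k, #{n ∈ s | f n = k} ≤ K) {g : ℕ → ℝ}
    (hg₀ : ∀ k, 0 ≤ g k) (hg : Summable g) :
    ∑ n ∈ s, g (f n) ≤ K * ∑' k, g k := by
  classical
  rw [Finset.sum_comp]
  calc ∑ k ∈ s.image f, #{n ∈ s | f n = k} • g k
      ≤ ∑ k ∈ s.image f, K * g k := by
        gcongr with k
        rw [nsmul_eq_mul]
        exact mul_le_mul_of_nonneg_right (by exact_mod_cast hf k) (hg₀ k)
    _ ≤ K * ∑' k, g k := by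
        rw [← Finset.mul_sum]
        exact mul_le_mul_of_nonneg_left (hg.sum_le_tsum _ fun k _ => hg₀ k) (by positivity)

lemma Finset.card_filter_dist_eq_le (hf : ∀ k, #{n ∈ s | f n = k} ≤ K) (a k : ℕ) :
    #{n ∈ s | a.dist (f n) = k} ≤ 2 * K := by
  classical
  calc #{n ∈ s | a.dist (f n) = k}
      ≤ #({n ∈ s | f n = a + k} ∪ {n ∈ s | f n = a - k}) := by
        refine Finset.card_le_card fun n hn => ?_
        obtain ⟨hns, hd⟩ := Finset.mem_filter.mp hn
        unfold Nat.dist at hd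
        rcases (by omega : f n = a + k ∨ f n = a - k) with h | h <;> simp [hns, h]
    _ ≤ K + K := (Finset.card_union_le _ _).trans (add_le_add (hf _) (hf _))
    _ = 2 * K := (two_mul K).symm

lemma Finset.sum_dist_add_indicator_le (hf : ∀ k, #{n ∈ s | f n = k} ≤ K) {φ : ℕ → ℝ}
    (hφ₀ : ∀ k, 0 ≤ φ k) (hφ : Summable φ) (a : ℕ) :
    ∑ n ∈ s, (φ (a.dist (f n)) + if f n = 0 then 1 else 0) ≤ 2 * K * ∑' k, φ k + K := by
  rw [Finset.sum_add_distrib, Finset.sum_boole]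
  gcongr
  · exact_mod_cast Finset.sum_comp_le_mul_tsum (Finset.card_filter_dist_eq_le hf a) hφ₀ hφ
  · exact_mod_cast hf 0

end Counting

lemma Finset.sum_sum_le_two_mul_of_le_add_swap {ι : Type*} (s : Finset ι) {F w : ι → ι → ℝ}
    {x : ι → ℝ} {C : ℝ} (hx : ∀ m ∈ s, 0 ≤ x m)
    (hF : ∀ m ∈ s, ∀ n ∈ s, F m n ≤ w m n * x m + w n m * x n)
    (hw : ∀ m ∈ s, ∑ n ∈ s, w m n ≤ C) :
    ∑ m ∈ s, ∑ n ∈ s, F m n ≤ 2 * C * ∑ m ∈ s, x m := by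
  have hrow : ∑ m ∈ s, ∑ n ∈ s, w m n * x m ≤ C * ∑ m ∈ s, x m := by
    rw [Finset.mul_sum]
    refine Finset.sum_le_sum fun m hm => ?_
    rw [← Finset.sum_mul]
    exact mul_le_mul_of_nonneg_right (hw m hm) (hx m hm)
  calc ∑ m ∈ s, ∑ n ∈ s, F m n
      ≤ ∑ m ∈ s, ∑ n ∈ s, (w m n * x m + w n m * x n) :=
        Finset.sum_le_sum fun m hm => Finset.sum_le_sum fun n hn => hF m hm n hn
    _ = ∑ m ∈ s, ∑ n ∈ s, w m n * x m + ∑ m ∈ s, ∑ n ∈ s, w m n * x m := by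
        have hswap : ∑ m ∈ s, ∑ n ∈ s, w n m * x n = ∑ m ∈ s, ∑ n ∈ s, w m n * x m :=
          Finset.sum_comm
        simp only [Finset.sum_add_distrib, hswap]
    _ ≤ 2 * C * ∑ m ∈ s, x m := by linarith

theorem stmt4 {Ω : Type*} [MeasurableSpace Ω] (μ : Measure Ω) [IsProbabilityMeasure μ]
    (Γ : ℕ → Set Ω)
    (φ : ℕ → ℝ) (hφ : Summable φ)
    (hmix : ∀ (m k : ℕ) (A B : Set Ω),
      MeasurableSet[MeasurableSpace.generateFrom {S | ∃ j : ℕ, 1 ≤ j ∧ j ≤ m ∧ S = Γ j}] A →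
      MeasurableSet[MeasurableSpace.generateFrom {S | ∃ j : ℕ, m + k ≤ j ∧ S = Γ j}] B →
      μ A ≠ 0 →
      |(μ (A ∩ B)).toReal / (μ A).toReal - (μ B).toReal| ≤ φ k)
    (q : ℕ → ℕ) (K : ℕ)
    (hq : ∀ k : ℕ, {n : ℕ | q n = k}.Finite ∧ {n : ℕ | q n = k}.ncard ≤ K) :
    ∃ c : ℝ, 0 < c ∧ ∀ M N : ℕ, 1 ≤ M → M ≤ N →
      ∑ m ∈ Finset.Icc M N, ∑ n ∈ Finset.Icc M N,
        |(μ (Γ (q m) ∩ Γ (q n))).toReal - (μ (Γ (q m))).toReal * (μ (Γ (q n))).toReal|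
      ≤ c * ∑ n ∈ Finset.Icc M N, (μ (Γ (q n))).toReal := by
  have hmix : IsPhiMixing μ Γ φ := hmix
  have hfiber (s : Finset ℕ) (k : ℕ) : #{n ∈ s | q n = k} ≤ K := by
    rw [← Set.ncard_coe_finset]
    exact (Set.ncard_le_ncard (fun n hn => (Finset.mem_filter.mp hn).2) (hq k).1).trans (hq k).2
  set C := 2 * K * ∑' k, φ k + K
  have hC : 0 ≤ C := by have : 0 ≤ ∑' k, φ k := tsum_nonneg hmix.nonneg; positivity
  refine ⟨2 * C + 1, by positivity, fun M N _ _ => ?_⟩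
  calc _ ≤ 2 * C * ∑ n ∈ Icc M N, μ.real (Γ (q n)) :=
        Finset.sum_sum_le_two_mul_of_le_add_swap _ (fun _ _ => measureReal_nonneg)
          (fun m _ n _ => hmix.abs_measureReal_inter_sub_mul_le_weighted (q m) (q n))
          (fun m _ => Finset.sum_dist_add_indicator_le (hfiber _) hmix.nonneg hφ (q m))
    _ ≤ (2 * C + 1) * ∑ n ∈ Icc M N, μ.real (Γ (q n)) := by gcongr; linarith
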